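/- Let k be a finite field of odd characteristic with q elements, δ = 0, and let J(k) be the group of invertible upper-triangular-type matrices [[a, x, z], [0, b, y], [0, 0, a]] with a, b ∈ k^×, x, y, z ∈ k, acting on the space j(k)ᵀ of lower-triangular matrices X(α, β, σ, τ, ν) = [[α,0,0],[σ,β,0],[ν,τ,α]] (α,β,σ,τ,ν ∈ k) by g·X = proj_{j(k)ᵀ}(g X g^{−1}), where the projection replaces entries above the diagonal by zeros and replaces the (1,1) and (3,3) entries by their average. Then the orbits are: (i) q² singleton orbits {X(α,β,0,0,0)}; (ii) q²(q−1) orbits of size q², one for each triple (ν, 2α+β, στ−βν) with ν ∈ k^×; (iii) q(q+1) orbits of size q(q−1), one for each pair (2α+β, [σ:τ]) with [σ:τ] ∈ P¹(k) and ν = 0. -/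

import Mathlib

/-- The action of an element `[[a,x,z],[0,b,y],[0,0,a]]` of `J(k)` (with `δ = 0`) on the
cross-section `j(k)ᵀ ≅ k⁵`, parametrised as `v = (α, β, σ, τ, ν)`, given by conjugation
followed by the projection onto the cross-section (display (7.2) of the paper). -/
def Jact {k : Type*} [Field k] (a b x y : k) (v : Fin 5 → k) : Fin 5 → k :=
  ![v 0 + x / (2 * a) * v 2 - y / (2 * b) * v 3 + x * y / (2 * a * b) * v 4,
    v 1 - x / a * v 2 + y / b * v 3 - x * y / (a * b) * v 4,
    b / a * v 2 + y / a * v 4,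
    a / b * v 3 - x / b * v 4,
    v 4]

/-- Orbit relation: `w` lies in the `J(k)`-orbit of `v`. -/
def Jrel {k : Type*} [Field k] (v w : Fin 5 → k) : Prop :=
  ∃ a b x y z : k, a ≠ 0 ∧ b ≠ 0 ∧ z = z ∧ w = Jact a b x y v

/-- The `J(k)`-orbit of `v`. -/
def Jorb {k : Type*} [Field k] (v : Fin 5 → k) : Set (Fin 5 → k) :=
  {w | Jrel v w}

/-!
The quantities `ν`, `2α + β` and `στ − βν` are invariant under (7.2).

If `ν ≠ 0` they form a complete invariant: the elements with `a = b = 1` already move `(σ, τ)` to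
any prescribed value, after which the invariants determine `α` and `β`. So each such orbit is a
copy of `k²` (parametrised by `(x, y)`), and the orbits are indexed by `kˣ × k × k`.

If `ν = 0` the group acts on `(σ, τ)` by `(σ, τ) ↦ (λσ, λ⁻¹τ)` with `λ = b / a`, while `x` or `y`
moves `β` freely along the line `2α + β = const`. The orbits of this `kˣ`-action on `k² ∖ {0}` are
the axis `σ = 0` and the hyperbolas `στ = p`, `σ ≠ 0`; hence each orbit with `(σ, τ) ≠ 0` is a copy
of `k × kˣ`, and these orbits are indexed by `k × Option k`, which has as many elements as
`k × ℙ¹(k)`.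
-/

lemma ext_fin_five {α : Type*} {v w : Fin 5 → α} (h0 : v 0 = w 0) (h1 : v 1 = w 1)
    (h2 : v 2 = w 2) (h3 : v 3 = w 3) (h4 : v 4 = w 4) : v = w := by
  funext i; fin_cases i <;> assumption

lemma ncard_orbits_eq_of_complete_invariant {X Y : Type*} {A : Set X} {O : X → Set X}
    (f : X → Y) (hO : ∀ v ∈ A, O v = A ∩ f ⁻¹' {f v}) :
    {S | ∃ v ∈ A, S = O v}.ncard = (f '' A).ncard := by
  have hfibers : {S | ∃ v ∈ A, S = O v} = (fun y => A ∩ f ⁻¹' {y}) '' (f '' A) := by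
    ext S
    simp only [Set.mem_ofPred_eq, Set.image_image, Set.mem_image]
    exact exists_congr fun v => and_congr_right fun hv => by rw [hO v hv, eq_comm]
  rw [hfibers]
  refine Set.InjOn.ncard_image ?_
  rintro _ ⟨v, hv, rfl⟩ _ ⟨w, -, rfl⟩ (h : A ∩ f ⁻¹' {f v} = A ∩ f ⁻¹' {f w})
  have hv' : v ∈ A ∩ f ⁻¹' {f w} := h ▸ Set.mem_inter hv rfl
  exact hv'.2

section Hyperbola

variable {k : Type*} [Field k]

open Classical in
/-- The orbits of `kˣ` on `k² ∖ {0}` under `u • (s, t) = (u s, u⁻¹ t)` are the axis `s = 0`,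
labelled `none`, and the hyperbolas `s t = p` with `s ≠ 0`, labelled `some p`. -/
noncomputable def hyperbolaLabel (s t : k) : Option k := if s = 0 then none else some (s * t)

lemma hyperbolaLabel_units_mul (u : kˣ) (s t : k) :
    hyperbolaLabel (u * s) ((u : k)⁻¹ * t) = hyperbolaLabel s t := by
  classical
  have hst : (u : k) * s * ((u : k)⁻¹ * t) = s * t := by field_simp
  simp only [hyperbolaLabel, Units.mul_right_eq_zero, hst]

lemma exists_units_of_hyperbolaLabel_eq {s t s' t' : k} (h : ¬(s = 0 ∧ t = 0))
    (h' : ¬(s' = 0 ∧ t' = 0)) (he : hyperbolaLabel s' t' = hyperbolaLabel s t) :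
    ∃ u : kˣ, s' = u * s ∧ t' = (u : k)⁻¹ * t := by
  unfold hyperbolaLabel at he
  by_cases hs : s = 0 <;> by_cases hs' : s' = 0 <;>
    simp only [hs, hs', if_true, if_false, reduceCtorEq] at he
  · have ht : t ≠ 0 := fun ht => h ⟨hs, ht⟩
    have ht' : t' ≠ 0 := fun ht' => h' ⟨hs', ht'⟩
    refine ⟨Units.mk0 (t / t') (div_ne_zero ht ht'), by simp [hs, hs'], ?_⟩
    simp only [Units.val_mk0, inv_div]
    field_simp
  · refine ⟨Units.mk0 (s' / s) (div_ne_zero hs' hs), by simp [hs], ?_⟩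
    simp only [Units.val_mk0, inv_div, Option.some.injEq] at he ⊢
    field_simp
    linear_combination he

end Hyperbola

section Action

variable {k : Type*} [Field k]

@[simp] lemma Jact_apply_zero (a b x y : k) (v : Fin 5 → k) : Jact a b x y v 0
    = v 0 + x / (2 * a) * v 2 - y / (2 * b) * v 3 + x * y / (2 * a * b) * v 4 := rfl
@[simp] lemma Jact_apply_one (a b x y : k) (v : Fin 5 → k) : Jact a b x y v 1
    = v 1 - x / a * v 2 + y / b * v 3 - x * y / (a * b) * v 4 := rfl
@[simp] lemma Jact_apply_two (a b x y : k) (v : Fin 5 → k) :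
    Jact a b x y v 2 = b / a * v 2 + y / a * v 4 := rfl
@[simp] lemma Jact_apply_three (a b x y : k) (v : Fin 5 → k) :
    Jact a b x y v 3 = a / b * v 3 - x / b * v 4 := rfl
@[simp] lemma Jact_apply_four (a b x y : k) (v : Fin 5 → k) : Jact a b x y v 4 = v 4 := rfl

lemma Jrel_refl (v : Fin 5 → k) : Jrel v v :=
  ⟨1, 1, 0, 0, 0, one_ne_zero, one_ne_zero, rfl, by apply ext_fin_five <;> simp⟩

lemma Jorb_eq_singleton {v : Fin 5 → k} (hσ : v 2 = 0) (hτ : v 3 = 0) (hν : v 4 = 0) :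
    Jorb v = {v} := by
  refine Set.eq_singleton_iff_unique_mem.2 ⟨Jrel_refl v, ?_⟩
  rintro _ ⟨a, b, x, y, z, -, -, -, rfl⟩
  apply ext_fin_five <;> simp [hσ, hτ, hν]

lemma ncard_setOf_sigma_tau_nu_eq_zero :
    {v : Fin 5 → k | v 2 = 0 ∧ v 3 = 0 ∧ v 4 = 0}.ncard = Nat.card k ^ 2 := by
  have hrange : {v : Fin 5 → k | v 2 = 0 ∧ v 3 = 0 ∧ v 4 = 0}
      = Set.range fun p : k × k => ![p.1, p.2, 0, 0, 0] := by
    ext v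
    refine ⟨fun ⟨hσ, hτ, hν⟩ => ⟨(v 0, v 1), ext_fin_five rfl rfl hσ.symm hτ.symm hν.symm⟩, ?_⟩
    rintro ⟨p, rfl⟩
    exact ⟨rfl, rfl, rfl⟩
  rw [hrange, Set.ncard_range_of_injective, Nat.card_prod, sq]
  intro p p' h
  exact Prod.ext (congrFun h 0) (congrFun h 1)

def Jinvariants (v : Fin 5 → k) : k × k × k := (v 4, 2 * v 0 + v 1, v 2 * v 3 - v 1 * v 4)

lemma Jinvariants_Jact (h2 : (2 : k) ≠ 0) {a b : k} (ha : a ≠ 0) (hb : b ≠ 0) (x y : k)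
    (v : Fin 5 → k) : Jinvariants (Jact a b x y v) = Jinvariants v := by
  simp only [Jinvariants, Jact_apply_zero, Jact_apply_one, Jact_apply_two, Jact_apply_three,
    Jact_apply_four, Prod.mk.injEq, true_and]
  constructor <;> field_simp <;> ring

lemma eq_Jact_of_Jinvariants_eq (h2 : (2 : k) ≠ 0) {v w : Fin 5 → k} (hν : v 4 ≠ 0)
    (h : Jinvariants w = Jinvariants v) :
    w = Jact 1 1 ((v 3 - w 3) / v 4) ((w 2 - v 2) / v 4) v := by
  simp only [Jinvariants, Prod.mk.injEq] at h
  obtain ⟨h4, htrace, hdet⟩ := h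
  rw [h4] at hdet
  apply ext_fin_five <;> simp only [Jact_apply_zero, Jact_apply_one, Jact_apply_two,
    Jact_apply_three, Jact_apply_four, h4] <;> field_simp
  · linear_combination v 4 * htrace + hdet
  · linear_combination -hdet
  all_goals ring

lemma Jorb_eq_fiber_Jinvariants (h2 : (2 : k) ≠ 0) {v : Fin 5 → k} (hν : v 4 ≠ 0) :
    Jorb v = Jinvariants ⁻¹' {Jinvariants v} := by
  ext w
  constructor
  · rintro ⟨a, b, x, y, -, ha, hb, -, rfl⟩
    exact Jinvariants_Jact h2 ha hb x y v
  · exact fun h =>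
      ⟨1, 1, _, _, 0, one_ne_zero, one_ne_zero, rfl, eq_Jact_of_Jinvariants_eq h2 hν h⟩

lemma Jorb_eq_range_of_four_ne_zero (h2 : (2 : k) ≠ 0) {v : Fin 5 → k} (hν : v 4 ≠ 0) :
    Jorb v = Set.range fun p : k × k => Jact 1 1 p.1 p.2 v := by
  refine Set.Subset.antisymm (fun w hw => ?_) ?_
  · rw [Jorb_eq_fiber_Jinvariants h2 hν] at hw
    exact ⟨((v 3 - w 3) / v 4, (w 2 - v 2) / v 4), (eq_Jact_of_Jinvariants_eq h2 hν hw).symm⟩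
  · rintro _ ⟨p, rfl⟩
    exact ⟨1, 1, p.1, p.2, 0, one_ne_zero, one_ne_zero, rfl, rfl⟩

lemma ncard_Jorb_of_four_ne_zero (h2 : (2 : k) ≠ 0) {v : Fin 5 → k} (hν : v 4 ≠ 0) :
    (Jorb v).ncard = Nat.card k ^ 2 := by
  rw [Jorb_eq_range_of_four_ne_zero h2 hν, Set.ncard_range_of_injective, Nat.card_prod, sq]
  intro p p' h
  have hy := congrFun h 2
  have hx := congrFun h 3
  simp only [Jact_apply_two, Jact_apply_three, div_one, add_right_inj, sub_right_inj] at hx hy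
  exact Prod.ext (mul_right_cancel₀ hν hx) (mul_right_cancel₀ hν hy)

lemma Jinvariants_image_setOf_four_ne_zero (h2 : (2 : k) ≠ 0) :
    Jinvariants '' {v | v 4 ≠ 0} = Set.range fun p : kˣ × k × k => ((p.1 : k), p.2) := by
  refine Set.Subset.antisymm ?_ ?_
  · rintro _ ⟨v, hν, rfl⟩
    exact ⟨(Units.mk0 (v 4) hν, _), rfl⟩
  · rintro _ ⟨⟨n, c, d⟩, rfl⟩
    refine ⟨![(c + d / n) / 2, -(d / n), 0, 0, n], n.ne_zero, ?_⟩
    simp only [Jinvariants, Prod.mk.injEq]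
    refine ⟨rfl, ?_, ?_⟩
    · simp only [Matrix.cons_val_zero, Matrix.cons_val_one]
      field_simp
      ring
    · simp [n.ne_zero]

lemma ncard_orbits_of_four_ne_zero (h2 : (2 : k) ≠ 0) :
    {S : Set (Fin 5 → k) | ∃ v, v 4 ≠ 0 ∧ S = Jorb v}.ncard
      = Nat.card k ^ 2 * (Nat.card k - 1) := by
  have hfiber : ∀ v ∈ {v : Fin 5 → k | v 4 ≠ 0},
      Jorb v = {v | v 4 ≠ 0} ∩ Jinvariants ⁻¹' {Jinvariants v} := by
    intro v hν
    rw [Jorb_eq_fiber_Jinvariants h2 hν, Set.inter_eq_self_of_subset_right]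
    exact fun w hw => (congrArg Prod.fst hw).trans_ne hν
  refine (ncard_orbits_eq_of_complete_invariant Jinvariants hfiber).trans ?_
  rw [Jinvariants_image_setOf_four_ne_zero h2, Set.ncard_range_of_injective, Nat.card_prod,
    Nat.card_prod, Nat.card_units]
  · ring
  · rintro ⟨u, p⟩ ⟨u', p'⟩ h
    simp only [Prod.mk.injEq, Units.val_inj] at h
    rw [h.1, h.2]

def nuZeroStratum : Set (Fin 5 → k) := {v | v 4 = 0 ∧ ¬(v 2 = 0 ∧ v 3 = 0)}

noncomputable def nuZeroLabel (v : Fin 5 → k) : k × Option k :=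
  (2 * v 0 + v 1, hyperbolaLabel (v 2) (v 3))

def nuZeroOrbitParam (v : Fin 5 → k) (p : k × kˣ) : Fin 5 → k :=
  ![(2 * v 0 + v 1 - p.1) / 2, p.1, p.2 * v 2, (p.2 : k)⁻¹ * v 3, 0]

lemma Jact_mem_fiber_nuZeroLabel (h2 : (2 : k) ≠ 0) {a b : k} (ha : a ≠ 0) (hb : b ≠ 0)
    (x y : k) {v : Fin 5 → k} (hv : v ∈ nuZeroStratum) :
    Jact a b x y v ∈ nuZeroStratum ∩ nuZeroLabel ⁻¹' {nuZeroLabel v} := by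
  obtain ⟨hν, hστ⟩ := hv
  set u := Units.mk0 (b / a) (div_ne_zero hb ha)
  have hσ : Jact a b x y v 2 = u * v 2 := by simp [u, hν]
  have hτ : Jact a b x y v 3 = (u : k)⁻¹ * v 3 := by simp [u, hν]
  have htrace := congrArg (fun p => p.2.1) (Jinvariants_Jact h2 ha hb x y v)
  refine ⟨⟨hν, ?_⟩, ?_⟩
  · rw [hσ, hτ]
    rintro ⟨h0, h1⟩
    exact hστ ⟨(mul_eq_zero.1 h0).resolve_left u.ne_zero,
      (mul_eq_zero.1 h1).resolve_left (inv_ne_zero u.ne_zero)⟩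
  · simp only [Set.mem_preimage, Set.mem_singleton_iff, nuZeroLabel, Prod.mk.injEq]
    exact ⟨htrace, by rw [hσ, hτ, hyperbolaLabel_units_mul]⟩

lemma mem_range_nuZeroOrbitParam (h2 : (2 : k) ≠ 0) {v w : Fin 5 → k}
    (hστ : ¬(v 2 = 0 ∧ v 3 = 0)) (hw : w ∈ nuZeroStratum ∩ nuZeroLabel ⁻¹' {nuZeroLabel v}) :
    w ∈ Set.range (nuZeroOrbitParam v) := by
  obtain ⟨⟨hwν, hwστ⟩, hlabel⟩ := hw
  simp only [Set.mem_preimage, Set.mem_singleton_iff, nuZeroLabel, Prod.mk.injEq] at hlabel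
  obtain ⟨u, hσ, hτ⟩ := exists_units_of_hyperbolaLabel_eq hστ hwστ hlabel.2
  refine ⟨(w 1, u), ext_fin_five ?_ rfl hσ.symm hτ.symm hwν.symm⟩
  simp only [nuZeroOrbitParam, Matrix.cons_val_zero]
  field_simp
  linear_combination -hlabel.1

lemma nuZeroOrbitParam_mem_Jorb (h2 : (2 : k) ≠ 0) {v : Fin 5 → k} (hν : v 4 = 0)
    (hστ : ¬(v 2 = 0 ∧ v 3 = 0)) (p : k × kˣ) : nuZeroOrbitParam v p ∈ Jorb v := by
  obtain ⟨β, u⟩ := p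
  have hmem : ∀ x y : k, v 1 - x * v 2 + y / u * v 3 = β →
      nuZeroOrbitParam v (β, u) ∈ Jorb v := by
    rintro x y rfl
    refine ⟨1, u, x, y, 0, one_ne_zero, u.ne_zero, rfl, ?_⟩
    apply ext_fin_five <;> simp only [nuZeroOrbitParam, Matrix.cons_val, Matrix.cons_val_zero,
      Matrix.cons_val_one, Jact_apply_zero, Jact_apply_one, Jact_apply_two, Jact_apply_three,
      Jact_apply_four, hν, mul_zero, add_zero, sub_zero, div_one, one_div, mul_one, one_mul]
    field_simp
    ring
  by_cases hσ : v 2 = 0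
  · have hτ : v 3 ≠ 0 := fun hτ => hστ ⟨hσ, hτ⟩
    exact hmem 0 (u * (β - v 1) / v 3) (by field_simp; ring)
  · exact hmem ((v 1 - β) / v 2) 0 (by field_simp; ring)

lemma Jorb_eq_fiber_nuZeroLabel (h2 : (2 : k) ≠ 0) {v : Fin 5 → k} (hv : v ∈ nuZeroStratum) :
    Jorb v = nuZeroStratum ∩ nuZeroLabel ⁻¹' {nuZeroLabel v} := by
  refine Set.Subset.antisymm ?_ fun w hw => ?_
  · rintro _ ⟨a, b, x, y, -, ha, hb, -, rfl⟩
    exact Jact_mem_fiber_nuZeroLabel h2 ha hb x y hv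
  · obtain ⟨p, rfl⟩ := mem_range_nuZeroOrbitParam h2 hv.2 hw
    exact nuZeroOrbitParam_mem_Jorb h2 hv.1 hv.2 p

lemma Jorb_eq_range_nuZeroOrbitParam (h2 : (2 : k) ≠ 0) {v : Fin 5 → k} (hν : v 4 = 0)
    (hστ : ¬(v 2 = 0 ∧ v 3 = 0)) : Jorb v = Set.range (nuZeroOrbitParam v) := by
  refine Set.Subset.antisymm (fun w hw => ?_) ?_
  · rw [Jorb_eq_fiber_nuZeroLabel h2 ⟨hν, hστ⟩] at hw
    exact mem_range_nuZeroOrbitParam h2 hστ hw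
  · rintro _ ⟨p, rfl⟩
    exact nuZeroOrbitParam_mem_Jorb h2 hν hστ p

lemma nuZeroOrbitParam_injective {v : Fin 5 → k} (hστ : ¬(v 2 = 0 ∧ v 3 = 0)) :
    Function.Injective (nuZeroOrbitParam v) := by
  rintro ⟨β, u⟩ ⟨β', u'⟩ h
  have hβ : β = β' := congrFun h 1
  have hσ : u * v 2 = u' * v 2 := congrFun h 2
  have hτ : (u : k)⁻¹ * v 3 = (u' : k)⁻¹ * v 3 := congrFun h 3
  refine Prod.ext hβ (Units.val_injective ?_)
  by_cases h0 : v 2 = 0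
  · exact inv_injective (mul_right_cancel₀ (fun h3 => hστ ⟨h0, h3⟩) hτ)
  · exact mul_right_cancel₀ h0 hσ

lemma ncard_Jorb_of_four_eq_zero (h2 : (2 : k) ≠ 0) {v : Fin 5 → k} (hν : v 4 = 0)
    (hστ : ¬(v 2 = 0 ∧ v 3 = 0)) : (Jorb v).ncard = Nat.card k * (Nat.card k - 1) := by
  rw [Jorb_eq_range_nuZeroOrbitParam h2 hν hστ,
    Set.ncard_range_of_injective (nuZeroOrbitParam_injective hστ), Nat.card_prod, Nat.card_units]

lemma nuZeroLabel_image_nuZeroStratum (h2 : (2 : k) ≠ 0) :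
    nuZeroLabel '' (nuZeroStratum : Set (Fin 5 → k)) = Set.univ := by
  refine Set.eq_univ_of_forall fun ⟨c, o⟩ => ?_
  have hc : 2 * (c / 2) = c := mul_div_cancel₀ c h2
  cases o with
  | none =>
    exact ⟨![c / 2, 0, 0, 1, 0], ⟨rfl, by simp⟩, by simp [nuZeroLabel, hyperbolaLabel, hc]⟩
  | some p =>
    exact ⟨![c / 2, 0, 1, p, 0], ⟨rfl, by simp⟩, by simp [nuZeroLabel, hyperbolaLabel, hc]⟩

lemma ncard_orbits_of_four_eq_zero [Finite k] (h2 : (2 : k) ≠ 0) :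
    {S : Set (Fin 5 → k) | ∃ v, v 4 = 0 ∧ ¬(v 2 = 0 ∧ v 3 = 0) ∧ S = Jorb v}.ncard
      = Nat.card k * (Nat.card k + 1) := by
  have hset : {S : Set (Fin 5 → k) | ∃ v, v 4 = 0 ∧ ¬(v 2 = 0 ∧ v 3 = 0) ∧ S = Jorb v}
      = {S | ∃ v ∈ nuZeroStratum, S = Jorb v} := by
    simp only [nuZeroStratum, Set.mem_ofPred_eq, and_assoc]
  rw [hset, ncard_orbits_eq_of_complete_invariant nuZeroLabel
    fun v hv => Jorb_eq_fiber_nuZeroLabel h2 hv, nuZeroLabel_image_nuZeroStratum h2,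
    Set.ncard_univ, Nat.card_prod, Finite.card_option]

end Action

theorem J_coadjoint_orbits_field_case
    (k : Type*) [Field k] [Fintype k] (hchar : ringChar k ≠ 2)
    (q : ℕ) (hq : q = Fintype.card k) :
    -- (i) singleton orbits
    (∀ v : Fin 5 → k, v 2 = 0 → v 3 = 0 → v 4 = 0 → Jorb v = {v}) ∧
    ({v : Fin 5 → k | v 2 = 0 ∧ v 3 = 0 ∧ v 4 = 0}.ncard = q ^ 2) ∧
    -- (ii) orbits with ν ≠ 0: size q², classified by (ν, 2α+β, στ−βν)
    (∀ v : Fin 5 → k, v 4 ≠ 0 →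
      (Jorb v).ncard = q ^ 2 ∧
      ∀ w : Fin 5 → k, Jrel v w ↔
        (w 4 = v 4 ∧ 2 * w 0 + w 1 = 2 * v 0 + v 1 ∧
          w 2 * w 3 - w 1 * w 4 = v 2 * v 3 - v 1 * v 4)) ∧
    ({S : Set (Fin 5 → k) | ∃ v, v 4 ≠ 0 ∧ S = Jorb v}.ncard = q ^ 2 * (q - 1)) ∧
    -- (iii) orbits with ν = 0, (σ,τ) ≠ (0,0): size q(q−1), q(q+1) of them,
    -- one for each pair (2α+β, point of P¹(k))
    (∀ v : Fin 5 → k, v 4 = 0 → ¬(v 2 = 0 ∧ v 3 = 0) →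
      (Jorb v).ncard = q * (q - 1)) ∧
    ({S : Set (Fin 5 → k) | ∃ v, v 4 = 0 ∧ ¬(v 2 = 0 ∧ v 3 = 0) ∧ S = Jorb v}.ncard
        = q * (q + 1)) ∧
    Nonempty ({S : Set (Fin 5 → k) // ∃ v, v 4 = 0 ∧ ¬(v 2 = 0 ∧ v 3 = 0) ∧ S = Jorb v}
        ≃ k × Projectivization k (Fin 2 → k)) := by
  have h2 : (2 : k) ≠ 0 := Ring.two_ne_zero hchar
  obtain rfl : q = Nat.card k := hq.trans Nat.card_eq_fintype_card.symm
  refine ⟨fun v => Jorb_eq_singleton, ncard_setOf_sigma_tau_nu_eq_zero,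
    fun v hν => ⟨ncard_Jorb_of_four_ne_zero h2 hν, fun w => ?_⟩, ncard_orbits_of_four_ne_zero h2,
    fun v => ncard_Jorb_of_four_eq_zero h2, ncard_orbits_of_four_eq_zero h2, ?_⟩
  · exact (Set.ext_iff.1 (Jorb_eq_fiber_Jinvariants h2 hν) w).trans
      (by simp only [Set.mem_preimage, Set.mem_singleton_iff, Jinvariants, Prod.mk.injEq])
  · refine Finite.card_eq.1 ((ncard_orbits_of_four_eq_zero h2).trans ?_)
    rw [Nat.card_prod, Projectivization.card_of_finrank_two k _ (Module.finrank_fin_fun k)]
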